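/- Suppose the excess entropy E = Σ_{L=1}^∞ [h_μ(L) - h_μ] converges. Then the block entropy lies below its asymptote for every L ≥ 0: H(L) ≤ E + h_μ·L. Consequently, an observer who assumes synchronization and estimates the entropy rate at block length L ≥ 1 as ĥ_μ := (H(L) - E)/L always underestimates the true entropy rate: ĥ_μ ≤ h_μ. -/

import Mathlib

/-!
Block entropy is concave: `H(L+2) - H(L+1) ≤ H(L+1) - H(L)`, because by stationarity this is
the strong subadditivity `H(X₀…X_{L+1}) + H(X₁…X_L) ≤ H(X₀…X_L) + H(X₁…X_{L+1})`, an instance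
of Gibbs' inequality. Hence the terms `h_μ(L) - h_μ` of the convergent series for `E` decrease
to `0`, so they are nonnegative and every partial sum, which telescopes to `H(L) - h_μ L`, is at
most `E`.
-/

open MeasureTheory Real Filter

/-- The probability of the cylinder set of sequences beginning with the word `w`. -/
noncomputable def cylP {A : Type*} [MeasurableSpace A] (μ : Measure (ℕ → A)) {L : ℕ}
    (w : Fin L → A) : ℝ :=
  (μ {x : ℕ → A | ∀ i : Fin L, x i.1 = w i}).toReal

/-- The block entropy `H(L)` in bits, with the convention `0 · log₂ 0 = 0`;
terms with `cylP μ w = 0` contribute `0` to the sum. -/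
noncomputable def blockH {A : Type*} [MeasurableSpace A] [Fintype A]
    (μ : Measure (ℕ → A)) (L : ℕ) : ℝ :=
  -∑ w : Fin L → A, cylP μ w * Real.logb 2 (cylP μ w)

/-- The left shift on one-sided sequences. -/
def shift {A : Type*} : (ℕ → A) → (ℕ → A) := fun x n => x (n + 1)

namespace Real

lemma mul_log_sub_mul_log_le_sub {p q : ℝ} (hp : 0 ≤ p) (hq : 0 ≤ q) (hpq : q = 0 → p = 0) :
    p * log q - p * log p ≤ q - p := by
  rcases hp.eq_or_lt with rfl | hp
  · simpa using hq
  have hq : 0 < q := hq.lt_of_ne fun h => hp.ne' (hpq h.symm)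
  calc p * log q - p * log p = p * log (q / p) := by rw [log_div hq.ne' hp.ne']; ring
    _ ≤ p * (q / p - 1) := by gcongr; exact log_le_sub_one_of_pos (div_pos hq hp)
    _ = q - p := by field_simp

theorem sum_negMulLog_add_negMulLog_sum_le {α γ : Type*} [Fintype α] [Fintype γ]
    (M : α → γ → ℝ) (hM : ∀ x z, 0 ≤ M x z) :
    ∑ x, ∑ z, negMulLog (M x z) + negMulLog (∑ x, ∑ z, M x z) ≤
      ∑ x, negMulLog (∑ z, M x z) + ∑ z, negMulLog (∑ x, M x z) := by
  set r : α → ℝ := fun x => ∑ z, M x z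
  set c : γ → ℝ := fun z => ∑ x, M x z
  set m : ℝ := ∑ x, r x
  have hr : ∀ x z, M x z ≤ r x := fun x z =>
    Finset.single_le_sum (fun z _ => hM x z) (Finset.mem_univ z)
  have hc : ∀ x z, M x z ≤ c z := fun x z =>
    Finset.single_le_sum (fun x _ => hM x z) (Finset.mem_univ x)
  have hm : ∀ x, r x ≤ m := fun x =>
    Finset.single_le_sum (fun x _ => Finset.sum_nonneg fun z _ => hM x z) (Finset.mem_univ x)
  have hmarg_pos : ∀ x z, 0 < M x z → 0 < r x ∧ 0 < c z ∧ 0 < m := fun x z h =>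
    ⟨h.trans_le (hr x z), h.trans_le (hc x z), (h.trans_le (hr x z)).trans_le (hm x)⟩
  -- Gibbs' inequality against the product of the marginals, which has the same mass `m`.
  set q : α → γ → ℝ := fun x z => r x * c z / m
  have hq_nonneg : ∀ x z, 0 ≤ q x z := fun x z =>
    div_nonneg (mul_nonneg ((hM x z).trans (hr x z)) ((hM x z).trans (hc x z)))
      (((hM x z).trans (hr x z)).trans (hm x))
  have hlog_q : ∀ x z,
      M x z * log (q x z) = M x z * log (r x) + M x z * log (c z) - M x z * log m := by
    intro x z
    rcases (hM x z).eq_or_lt with h0 | hpos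
    · simp [← h0]
    obtain ⟨hr0, hc0, hm0⟩ := hmarg_pos x z hpos
    rw [log_div (mul_pos hr0 hc0).ne' hm0.ne', log_mul hr0.ne' hc0.ne']
    ring
  have hgibbs : ∀ x z, M x z * log (q x z) - M x z * log (M x z) ≤ q x z - M x z := by
    intro x z
    refine mul_log_sub_mul_log_le_sub (hM x z) (hq_nonneg x z) fun hq => ?_
    by_contra hne
    obtain ⟨hr0, hc0, hm0⟩ := hmarg_pos x z ((hM x z).lt_of_ne' hne)
    exact (div_pos (mul_pos hr0 hc0) hm0).ne' hq
  have hq_sum : ∑ x, ∑ z, q x z = m := by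
    simp only [q, ← Finset.sum_div, ← Finset.mul_sum, ← Finset.sum_mul]
    rw [show ∑ z, c z = m from Finset.sum_comm, mul_self_div_self]
  have hr_sum : ∑ x, ∑ z, M x z * log (r x) = ∑ x, r x * log (r x) := by
    simp only [← Finset.sum_mul, r]
  have hc_sum : ∑ x, ∑ z, M x z * log (c z) = ∑ z, c z * log (c z) := by
    rw [Finset.sum_comm]; simp only [← Finset.sum_mul, c]
  have hm_sum : ∑ x, ∑ z, M x z * log m = m * log m := by
    simp only [← Finset.sum_mul, m, r]
  have hsum := Finset.sum_le_sum fun x (_ : x ∈ Finset.univ) =>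
    Finset.sum_le_sum fun z (_ : z ∈ Finset.univ) => hgibbs x z
  simp only [Finset.sum_sub_distrib, hlog_q, Finset.sum_add_distrib, hq_sum, hr_sum, hc_sum,
    hm_sum] at hsum
  simp only [negMulLog, neg_mul, Finset.sum_neg_distrib]
  linarith

end Real

lemma Fin.sum_univ_pi_cons {A M : Type*} [Fintype A] [AddCommMonoid M] {n : ℕ}
    (f : (Fin (n + 1) → A) → M) : ∑ w, f w = ∑ a, ∑ w : Fin n → A, f (Fin.cons a w) := by
  rw [← (Fin.consEquiv fun _ => A).sum_comp, Fintype.sum_prod_type]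
  rfl

lemma Fin.sum_univ_pi_snoc {A M : Type*} [Fintype A] [AddCommMonoid M] {n : ℕ}
    (f : (Fin (n + 1) → A) → M) : ∑ w, f w = ∑ w : Fin n → A, ∑ a, f (Fin.snoc w a) := by
  rw [← (Fin.snocEquiv fun _ => A).sum_comp, Fintype.sum_prod_type, Finset.sum_comm]
  rfl

lemma MeasureTheory.sum_measure_inter_preimage_singleton {X A : Type*} [MeasurableSpace X]
    [MeasurableSpace A] [MeasurableSingletonClass A] [Fintype A] (μ : Measure X) {f : X → A}
    (hf : Measurable f) (s : Set X) : ∑ a, μ (s ∩ f ⁻¹' {a}) = μ s := by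
  calc ∑ a, μ (s ∩ f ⁻¹' {a}) = ∑ a, μ.restrict s (f ⁻¹' {a}) := by
        simp only [Measure.restrict_apply (hf (measurableSet_singleton _)), Set.inter_comm]
    _ = μ s := by
        rw [sum_measure_preimage_singleton _ fun a _ => hf (measurableSet_singleton a)]
        simp

section Cylinders

variable {A : Type*}

def wordCylinder {L : ℕ} (w : Fin L → A) : Set (ℕ → A) := {x | ∀ i : Fin L, x i.1 = w i}

lemma measurableSet_wordCylinder [MeasurableSpace A] [MeasurableSingletonClass A] {L : ℕ}
    (w : Fin L → A) : MeasurableSet (wordCylinder w) := by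
  rw [wordCylinder, Set.ofPred_forall]
  exact .iInter fun i => measurableSet_singleton (w i) |>.preimage (measurable_pi_apply i.1)

lemma wordCylinder_snoc {L : ℕ} (w : Fin L → A) (a : A) :
    wordCylinder (Fin.snoc w a) = wordCylinder w ∩ (fun x : ℕ → A => x L) ⁻¹' {a} := by
  ext x
  simp [wordCylinder, Fin.forall_fin_succ']

lemma shift_preimage_wordCylinder_inter {L : ℕ} (w : Fin L → A) (a : A) :
    shift ⁻¹' wordCylinder w ∩ (fun x : ℕ → A => x 0) ⁻¹' {a} = wordCylinder (Fin.cons a w) := by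
  ext x
  simp [wordCylinder, shift, Fin.forall_fin_succ, and_comm]

lemma cylP_eq_toReal_measure_wordCylinder [MeasurableSpace A] (μ : Measure (ℕ → A)) {L : ℕ}
    (w : Fin L → A) : cylP μ w = (μ (wordCylinder w)).toReal :=
  rfl

end Cylinders

section BlockEntropy

variable {A : Type*} [MeasurableSpace A] [Fintype A] (μ : Measure (ℕ → A))

lemma cylP_eq_sum_snoc [MeasurableSingletonClass A] [IsFiniteMeasure μ] {L : ℕ} (w : Fin L → A) :
    cylP μ w = ∑ a, cylP μ (Fin.snoc w a) := by
  simp only [cylP_eq_toReal_measure_wordCylinder, wordCylinder_snoc]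
  rw [← ENNReal.toReal_sum fun _ _ => measure_ne_top _ _,
    sum_measure_inter_preimage_singleton μ (measurable_pi_apply L)]

lemma cylP_eq_sum_cons [MeasurableSingletonClass A] [IsFiniteMeasure μ]
    (hstat : MeasurePreserving shift μ μ) {L : ℕ} (w : Fin L → A) :
    cylP μ w = ∑ a, cylP μ (Fin.cons a w) := by
  simp only [cylP_eq_toReal_measure_wordCylinder, ← shift_preimage_wordCylinder_inter]
  rw [← ENNReal.toReal_sum fun _ _ => measure_ne_top _ _,
    sum_measure_inter_preimage_singleton μ (measurable_pi_apply 0),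
    hstat.measure_preimage (measurableSet_wordCylinder w).nullMeasurableSet]

lemma blockH_eq_sum_negMulLog (L : ℕ) :
    blockH μ L = (∑ w : Fin L → A, negMulLog (cylP μ w)) / log 2 := by
  simp only [blockH, negMulLog, logb, Finset.sum_div, ← Finset.sum_neg_distrib]
  congr 1 with w
  ring

lemma blockH_zero [IsProbabilityMeasure μ] : blockH μ 0 = 0 := by
  simp [blockH, cylP]

lemma blockH_add_two_add_blockH_le [MeasurableSingletonClass A] [IsFiniteMeasure μ]
    (hstat : MeasurePreserving shift μ μ) (L : ℕ) :
    blockH μ (L + 2) + blockH μ L ≤ 2 * blockH μ (L + 1) := by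
  -- For each middle word `y`, subadditivity in the first and the last letter.
  have key := fun y : Fin L → A => Real.sum_negMulLog_add_negMulLog_sum_le
    (fun x z => cylP μ (Fin.cons x (Fin.snoc y z) : Fin (L + 2) → A))
    fun _ _ => ENNReal.toReal_nonneg
  simp only [← cylP_eq_sum_cons μ hstat] at key
  simp only [Fin.cons_snoc_eq_snoc_cons, ← cylP_eq_sum_snoc, ← cylP_eq_sum_cons μ hstat] at key
  have hsum := Finset.sum_le_sum fun y (_ : y ∈ Finset.univ) => key y
  have hL2 : ∑ w : Fin (L + 2) → A, negMulLog (cylP μ w) = ∑ y : Fin L → A, ∑ x, ∑ z,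
      negMulLog (cylP μ (Fin.snoc (Fin.cons x y) z : Fin (L + 2) → A)) := by
    simp only [Fin.sum_univ_pi_cons (n := L + 1), Fin.sum_univ_pi_snoc (n := L),
      ← Fin.cons_snoc_eq_snoc_cons]
    exact Finset.sum_comm
  have hL1 : ∑ w : Fin (L + 1) → A, negMulLog (cylP μ w) =
      ∑ y : Fin L → A, ∑ x, negMulLog (cylP μ (Fin.cons x y)) := by
    rw [Fin.sum_univ_pi_cons, Finset.sum_comm]
  simp only [Finset.sum_add_distrib, ← hL2, ← hL1] at hsum
  rw [← Fin.sum_univ_pi_snoc fun w => negMulLog (cylP μ w)] at hsum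
  rw [blockH_eq_sum_negMulLog, blockH_eq_sum_negMulLog, blockH_eq_sum_negMulLog, ← add_div,
    mul_div_assoc', div_le_div_iff_of_pos_right (log_pos one_lt_two)]
  linarith

end BlockEntropy

lemma Antitone.sum_range_le_of_tendsto {d : ℕ → ℝ} (hd : Antitone d) {E : ℝ}
    (hE : Tendsto (fun N => ∑ n ∈ Finset.range N, d n) atTop (nhds E)) (N : ℕ) :
    ∑ n ∈ Finset.range N, d n ≤ E := by
  have hd_lim : Tendsto d atTop (nhds 0) := by
    simpa [Finset.sum_range_succ] using (hE.comp (tendsto_add_atTop_nat 1)).sub hE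
  have hd_nonneg : ∀ n, 0 ≤ d n := hd.le_of_tendsto hd_lim
  have hmono : Monotone fun N => ∑ n ∈ Finset.range N, d n :=
    monotone_nat_of_le_succ fun N => by simpa [Finset.sum_range_succ] using hd_nonneg N
  exact hmono.ge_of_tendsto hE N

theorem assumed_synchronization_underestimates_entropy_rate_general
    {A : Type*} [MeasurableSpace A] [MeasurableSingletonClass A] [Fintype A]
    (μ : Measure (ℕ → A)) [IsProbabilityMeasure μ]
    (hstat : MeasurePreserving (shift (A := A)) μ μ)
    (hμ : ℝ)
    (E : ℝ)
    (hE : Tendsto (fun N : ℕ => ∑ L ∈ Finset.range N, (blockH μ (L + 1) - blockH μ L - hμ))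
      atTop (nhds E)) :
    (∀ L : ℕ, blockH μ L ≤ E + hμ * L) ∧
    (∀ L : ℕ, 1 ≤ L → (blockH μ L - E) / L ≤ hμ) := by
  have hdecr : Antitone fun L => blockH μ (L + 1) - blockH μ L - hμ :=
    antitone_nat_of_succ_le fun L => by linarith [blockH_add_two_add_blockH_le μ hstat L]
  have hle : ∀ L : ℕ, blockH μ L ≤ E + hμ * L := fun L => by
    have hsum := hdecr.sum_range_le_of_tendsto hE L
    rw [Finset.sum_sub_distrib, Finset.sum_range_sub (blockH μ), blockH_zero] at hsum
    simp only [Finset.sum_const, Finset.card_range, nsmul_eq_mul] at hsum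
    linarith
  refine ⟨hle, fun L hL => ?_⟩
  rw [div_le_iff₀ (by positivity)]
  linarith [hle L]

/-- If the excess entropy `E = Σ_{L=1}^∞ [h_μ(L) - h_μ]` converges, then
`H(L) ≤ E + h_μ·L` for every `L ≥ 0`; consequently the assumed-synchronization
entropy-rate estimate `ĥ_μ = (H(L) - E)/L` underestimates `h_μ` for every `L ≥ 1`. -/
theorem assumed_synchronization_underestimates_entropy_rate
    {A : Type*} [MeasurableSpace A] [MeasurableSingletonClass A] [Fintype A]
    (hA : 2 ≤ Fintype.card A)
    (μ : Measure (ℕ → A)) [IsProbabilityMeasure μ]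
    (hstat : MeasurePreserving (shift (A := A)) μ μ)
    (hμ : ℝ) (hrate : Tendsto (fun L : ℕ => blockH μ L / L) atTop (nhds hμ))
    (E : ℝ)
    (hE : Tendsto (fun N : ℕ => ∑ L ∈ Finset.range N, (blockH μ (L + 1) - blockH μ L - hμ))
      atTop (nhds E)) :
    (∀ L : ℕ, blockH μ L ≤ E + hμ * L) ∧
    (∀ L : ℕ, 1 ≤ L → (blockH μ L - E) / L ≤ hμ) :=
  assumed_synchronization_underestimates_entropy_rate_general μ hstat hμ E hE
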